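/- Let J be a finite group and let 0 → A → B → C → 0 be a short exact sequence of finitely generated J-modules, where A is free as a ℤ-module and J acts trivially on A (so A_J = A). Then the induced sequence of coinvariants 0 → A → B_J → C_J → 0 is exact; in particular the induced map A → B_J is injective. -/

import Mathlib

/-! The norm map `m ↦ ∑ σ • m` kills the augmentation subgroup and multiplies `J`-fixed
elements by `|J|`; hence an element of the torsion-free trivial module `A` whose image lies
in `𝔄_J B` is zero. Surjectivity onto `C_J` and exactness at `B_J` follow formally from
`g (𝔄_J B) = 𝔄_J C`, which holds because `g` is surjective and equivariant. -/

variable (J A B C : Type) [Group J]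
  [AddCommGroup A] [DistribMulAction J A]
  [AddCommGroup B] [DistribMulAction J B]
  [AddCommGroup C] [DistribMulAction J C]

/-- The augmentation submodule `𝔄_J M` of a `J`-module `M`, generated by the elements
`σ • m - m`; the coinvariants `M_J` are the quotient `M ⧸ 𝔄_J M`. -/
def augSub (M : Type) [AddCommGroup M] [DistribMulAction J M] : AddSubgroup M :=
  AddSubgroup.closure {x | ∃ (σ : J) (m : M), σ • m - m = x}

section Coinvariants

variable {J B C}

theorem map_augSub_le {g : B →+ C} (hg : ∀ (σ : J) (b : B), g (σ • b) = σ • g b) :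
    (augSub J B).map g ≤ augSub J C := by
  rw [augSub, AddMonoidHom.map_closure, AddSubgroup.closure_le]
  rintro _ ⟨_, ⟨σ, b, rfl⟩, rfl⟩
  exact AddSubgroup.subset_closure ⟨σ, g b, by rw [map_sub, hg]⟩

theorem map_augSub_of_surjective {g : B →+ C} (hg : ∀ (σ : J) (b : B), g (σ • b) = σ • g b)
    (hsurj : Function.Surjective g) : (augSub J B).map g = augSub J C := by
  refine (map_augSub_le hg).antisymm ?_
  rw [augSub, AddSubgroup.closure_le]
  rintro _ ⟨σ, c, rfl⟩
  obtain ⟨b, rfl⟩ := hsurj c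
  exact ⟨σ • b - b, AddSubgroup.subset_closure ⟨σ, b, rfl⟩, by rw [map_sub, hg]⟩

variable (J) (M : Type) [AddCommGroup M] [DistribMulAction J M] [Fintype J]

def normMap : M →+ M :=
  ∑ σ : J, DistribSMul.toAddMonoidHom M σ

variable {M}

theorem normMap_apply (m : M) : normMap J M m = ∑ σ : J, σ • m := by
  simp [normMap]

theorem augSub_le_ker_normMap : augSub J M ≤ (normMap J M).ker := by
  rw [augSub, AddSubgroup.closure_le]
  rintro _ ⟨σ, m, rfl⟩
  have hshift : ∑ τ : J, τ • σ • m = ∑ τ : J, τ • m :=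
    Fintype.sum_equiv (Equiv.mulRight σ) _ _ fun τ => (mul_smul τ σ m).symm
  simp [AddMonoidHom.mem_ker, normMap_apply, smul_sub, Finset.sum_sub_distrib, hshift]

variable {J}

theorem normMap_of_fixed {m : M} (hfix : ∀ σ : J, σ • m = m) :
    normMap J M m = Fintype.card J • m := by
  simp [normMap_apply, hfix]

theorem card_nsmul_eq_zero_of_fixed_mem_augSub {m : M} (hfix : ∀ σ : J, σ • m = m)
    (hm : m ∈ augSub J M) : Fintype.card J • m = 0 := by
  rw [← normMap_of_fixed hfix]
  exact augSub_le_ker_normMap J hm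

end Coinvariants

theorem coinvariants_short_exact [Finite J]
    [Module.Free ℤ A]
    (htriv : ∀ (σ : J) (a : A), σ • a = a)
    (f : A →+ B) (g : B →+ C)
    (hf : ∀ (σ : J) (a : A), f (σ • a) = σ • f a)
    (hg : ∀ (σ : J) (b : B), g (σ • b) = σ • g b)
    (hinj : Function.Injective f) (hsurj : Function.Surjective g)
    (hexact : f.range = g.ker) :
    ∃ (f' : A →+ B ⧸ augSub J B) (g' : (B ⧸ augSub J B) →+ (C ⧸ augSub J C)),
      (∀ a : A, f' a = QuotientAddGroup.mk (f a)) ∧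
      (∀ b : B, g' (QuotientAddGroup.mk b) = QuotientAddGroup.mk (g b)) ∧
      Function.Injective f' ∧ Function.Surjective g' ∧ f'.range = g'.ker := by
  have := Fintype.ofFinite J
  have : IsAddTorsionFree A := .of_isTorsionFree ℤ A
  have hmap := map_augSub_of_surjective hg hsurj
  let π := QuotientAddGroup.mk' (augSub J B)
  refine ⟨π.comp f, QuotientAddGroup.map _ _ g (AddSubgroup.map_le_iff_le_comap.mp hmap.le),
    fun _ => rfl, fun _ => rfl, ?_, ?_, ?_⟩
  · refine (injective_iff_map_eq_zero _).mpr fun a ha => ?_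
    have hfa : f a ∈ augSub J B := (QuotientAddGroup.eq_zero_iff _).mp ha
    have hfix : ∀ σ : J, σ • f a = f a := fun σ => by rw [← hf, htriv]
    have hcard : f (Fintype.card J • a) = 0 := by
      rw [map_nsmul, card_nsmul_eq_zero_of_fixed_mem_augSub hfix hfa]
    exact (nsmul_eq_zero_iff_right Fintype.card_ne_zero).mp (hinj (hcard.trans f.map_zero.symm))
  · exact QuotientAddGroup.map_surjective_of_surjective _ _ _
      ((QuotientAddGroup.mk'_surjective _).comp hsurj) _
  · have hπ : (augSub J B).map π = ⊥ := by
      rw [AddSubgroup.map_eq_bot_iff, QuotientAddGroup.ker_mk']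
    rw [QuotientAddGroup.ker_map, ← hmap, AddSubgroup.comap_map_eq, AddSubgroup.map_sup, hπ,
      bot_sup_eq, ← hexact, AddMonoidHom.range_comp]
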